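/- Let θ* ∈ ℝ^d be nonzero and let v₁,…,v_{d-1} be an orthogonal basis of the orthogonal complement of θ*. Define the training set consisting of (v_i, 1) for i ∈ [d-1], (-∑_{i=1}^{d-1} v_i, 1), and (θ*, 1). Then the set of minimizers over θ ∈ ℝ^d of ∑_i max(-y_i·(θ·x_i), 0) over this training set equals {t·θ* : t ≥ 0}. -/
import Mathlib


open RealInnerProductSpace

theorem stmt_1 (d : ℕ) (hd : 1 ≤ d)
    (θs : EuclideanSpace ℝ (Fin d)) (hθ : θs ≠ 0)
    (v : Fin (d - 1) → EuclideanSpace ℝ (Fin d))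
    (hvne : ∀ i, v i ≠ 0)
    (hvorth : ∀ i j, i ≠ j → ⟪v i, v j⟫ = 0)
    (hvperp : ∀ i, ⟪v i, θs⟫ = 0)
    (L : EuclideanSpace ℝ (Fin d) → ℝ)
    (hL : ∀ θ, L θ =
      (∑ i, max (-(1 : ℝ) * ⟪θ, v i⟫) 0) +
      max (-(1 : ℝ) * ⟪θ, -∑ i, v i⟫) 0 +
      max (-(1 : ℝ) * ⟪θ, θs⟫) 0) :
    {θh | ∀ θ, L θh ≤ L θ} = {θ | ∃ t : ℝ, 0 ≤ t ∧ θ = t • θs} := by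
  have hL0 : L 0 = 0 := by
    simp [hL]
  have hLnonneg : ∀ θ, 0 ≤ L θ := by
    intro θ
    rw [hL]
    have h1 : (0:ℝ) ≤ ∑ i, max (-(1 : ℝ) * ⟪θ, v i⟫) 0 :=
      Finset.sum_nonneg fun i _ => le_max_right _ _
    have h2 := le_max_right (-(1 : ℝ) * ⟪θ, -∑ i, v i⟫) 0
    have h3 := le_max_right (-(1 : ℝ) * ⟪θ, θs⟫) 0
    linarith
  -- characterize zero-loss points
  ext θh
  simp only [Set.mem_setOf_eq]
  constructor
  · intro hmin
    have hzero : L θh = 0 := le_antisymm (hL0 ▸ hmin 0) (hLnonneg θh)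
    rw [hL] at hzero
    have h1 : (0:ℝ) ≤ ∑ i, max (-(1 : ℝ) * ⟪θh, v i⟫) 0 :=
      Finset.sum_nonneg fun i _ => le_max_right _ _
    have h2 := le_max_right (-(1 : ℝ) * ⟪θh, -∑ i, v i⟫) 0
    have h3 := le_max_right (-(1 : ℝ) * ⟪θh, θs⟫) 0
    have e1 : ∑ i, max (-(1 : ℝ) * ⟪θh, v i⟫) 0 = 0 := by linarith
    have e2 : max (-(1 : ℝ) * ⟪θh, -∑ i, v i⟫) 0 = 0 := by linarith
    have e3 : max (-(1 : ℝ) * ⟪θh, θs⟫) 0 = 0 := by linarith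
    -- each inner product with v i is nonneg
    have hge : ∀ i, 0 ≤ ⟪θh, v i⟫ := by
      intro i
      have := (Finset.sum_eq_zero_iff_of_nonneg
        (fun i _ => le_max_right (-(1 : ℝ) * ⟪θh, v i⟫) 0)).mp e1 i (Finset.mem_univ i)
      have h := le_max_left (-(1 : ℝ) * ⟪θh, v i⟫) 0
      rw [this] at h
      linarith
    have hsumle : ∑ i, ⟪θh, v i⟫ ≤ 0 := by
      have h := le_max_left (-(1 : ℝ) * ⟪θh, -∑ i, v i⟫) 0
      rw [e2] at h
      have : ⟪θh, -∑ i, v i⟫ = -∑ i, ⟪θh, v i⟫ := by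
        rw [inner_neg_right, inner_sum]
      rw [this] at h
      linarith
    have hinner0 : ∀ i, ⟪θh, v i⟫ = 0 := by
      intro i
      have hall : ∀ i ∈ Finset.univ, ⟪θh, v i⟫ = 0 := by
        apply (Finset.sum_eq_zero_iff_of_nonneg (fun i _ => hge i)).mp
        exact le_antisymm hsumle (Finset.sum_nonneg fun i _ => hge i)
      exact hall i (Finset.mem_univ i)
    have hθsge : 0 ≤ ⟪θh, θs⟫ := by
      have h := le_max_left (-(1 : ℝ) * ⟪θh, θs⟫) 0
      rw [e3] at h
      linarith
    -- dimension argument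
    have hli : LinearIndependent ℝ v :=
      linearIndependent_of_ne_zero_of_inner_eq_zero hvne hvorth
    set K : Submodule ℝ (EuclideanSpace ℝ (Fin d)) := Submodule.span ℝ (Set.range v) with hK
    have hKrank : Module.finrank ℝ K = d - 1 := by
      rw [hK, finrank_span_eq_card hli]
      simp
    have hdim : Module.finrank ℝ (EuclideanSpace ℝ (Fin d)) = d := by simp
    have hKorank : Module.finrank ℝ Kᗮ = 1 := by
      have := Submodule.finrank_add_finrank_orthogonal K
      omega
    have hθsmem : θs ∈ Kᗮ := by
      rw [Submodule.mem_orthogonal]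
      intro u hu
      induction hu using Submodule.span_induction with
      | mem x hx => obtain ⟨i, rfl⟩ := hx; exact hvperp i
      | zero => simp
      | add x y _ _ hx hy => rw [inner_add_left, hx, hy]; ring
      | smul c x _ hx => rw [inner_smul_left, hx]; ring
    have hθhmem : θh ∈ Kᗮ := by
      rw [Submodule.mem_orthogonal']
      intro u hu
      induction hu using Submodule.span_induction with
      | mem x hx => obtain ⟨i, rfl⟩ := hx; exact hinner0 i
      | zero => simp
      | add x y _ _ hx hy => rw [inner_add_right, hx, hy]; ring
      | smul c x _ hx => rw [inner_smul_right, hx]; ring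
    have hspan : Submodule.span ℝ {θs} = Kᗮ := by
      apply Submodule.eq_of_le_of_finrank_eq
      · rw [Submodule.span_le, Set.singleton_subset_iff]; exact hθsmem
      · rw [hKorank, finrank_span_singleton hθ]
    have : θh ∈ Submodule.span ℝ ({θs} : Set (EuclideanSpace ℝ (Fin d))) :=
      hspan ▸ hθhmem
    obtain ⟨c, hc⟩ := Submodule.mem_span_singleton.mp this
    refine ⟨c, ?_, hc.symm⟩
    by_contra hcn
    push_neg at hcn
    have hnorm : 0 < ⟪θs, θs⟫ := by
      have h := real_inner_self_eq_norm_mul_norm θs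
      have hn : 0 < ‖θs‖ := norm_pos_iff.mpr hθ
      nlinarith
    rw [← hc, inner_smul_left] at hθsge
    simp only [RCLike.conj_to_real] at hθsge
    nlinarith
  · rintro ⟨t, ht, rfl⟩
    intro θ
    have : L (t • θs) = 0 := by
      rw [hL]
      have h1 : ∀ i, ⟪t • θs, v i⟫ = 0 := by
        intro i
        rw [inner_smul_left, ← real_inner_comm, hvperp i]
        simp
      have h2 : ⟪t • θs, θs⟫ = t * ⟪θs, θs⟫ := by
        rw [real_inner_smul_left]
      have hnn : 0 ≤ ⟪t • θs, θs⟫ := by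
        rw [h2]; exact mul_nonneg ht real_inner_self_nonneg
      have e1 : ∀ i, -(1:ℝ) * ⟪t • θs, v i⟫ = 0 := fun i => by rw [h1 i]; ring
      have e2 : -(1:ℝ) * ⟪t • θs, -∑ i, v i⟫ = 0 := by
        rw [inner_neg_right, inner_sum]
        simp [h1]
      rw [e2]
      simp only [e1]
      rw [max_eq_right (by linarith : -(1:ℝ) * ⟪t • θs, θs⟫ ≤ 0)]
      simp
    rw [this]
    exact hLnonneg θ
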